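/- Let V ⊆ A₀ be compact with V^T complete. Then V** = (V^T)^⊥, where (V^T)^⊥ = { h ∈ A₀ : (g*h)(1) ≠ 0 for all g ∈ V^T }. -/

import Mathlib

open Metric Set Filter

noncomputable def coeff (f : ℂ → ℂ) (k : ℕ) : ℂ := iteratedDeriv k f 0 / (k.factorial : ℂ)

noncomputable def hadamard (f g : ℂ → ℂ) : ℂ → ℂ := fun z => ∑' k : ℕ, coeff f k * coeff g k * z ^ k

def Pt (x : ℂ) (f : ℂ → ℂ) : ℂ → ℂ := fun z => f (x * z)

def A0 : Set (ℂ → ℂ) := {f | AnalyticOnNhd ℂ f (ball (0:ℂ) 1) ∧ f 0 = 1}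

def cm (V : Set (ℂ → ℂ)) : Set (ℂ → ℂ) := {h | ∃ f ∈ V, ∃ x : ℂ, ‖x‖ ≤ 1 ∧ h = Pt x f}

def dual (V : Set (ℂ → ℂ)) : Set (ℂ → ℂ) :=
  {g ∈ A0 | ∀ f ∈ V, ∀ z ∈ ball (0:ℂ) 1, hadamard f g z ≠ 0}

def eligible (g : ℂ → ℂ) : Prop := ∃ R > 1, AnalyticOnNhd ℂ g (ball (0:ℂ) R)

def VT (V : Set (ℂ → ℂ)) : Set (ℂ → ℂ) :=
  {g | eligible g ∧ g 0 = 1 ∧ ∀ f ∈ V, hadamard f g 1 ≠ 0}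

def perp (U : Set (ℂ → ℂ)) : Set (ℂ → ℂ) :=
  {h ∈ A0 | ∀ g ∈ U, hadamard g h 1 ≠ 0}

def lamSet (g : ℂ → ℂ) (V : Set (ℂ → ℂ)) : Set ℂ := (fun f => hadamard f g 1) '' V

def S (R : ℝ) : Set (Set ℂ) := {K | K ⊆ ball (0:ℂ) R ∧ IsCompact K}

noncomputable def closLU (R : ℝ) (U : Set (ℂ → ℂ)) : Set (ℂ → ℂ) :=
  (UniformOnFun.toFun (S R)) '' closure ((UniformOnFun.ofFun (S R)) '' U)

/-!
For `g ∈ V^T`, completeness gives `(f * g)(w) ≠ 0` for all `f ∈ V` and `‖w‖ ≤ 1`. By Cauchy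
estimates `(F, w) ↦ (F * g)(w)` is jointly continuous for the topology of locally uniform
convergence on the disc, so compactness of `V` keeps its zeros a positive distance outside the
closed disc: `P_x g ∈ V*` for some real `x > 1`, and for `h ∈ V**` evaluating `P_x g * h` at `1/x`
gives `(g * h)(1) ≠ 0`. Conversely, for `f ∈ V*` and `0 < ‖z‖ < 1`, `P_z f` is analytic beyond the
closed disc, so it lies in `V^T`, and `(P_z f * h)(1) = (f * h)(z)`.
-/

open scoped UniformConvergence Topology

theorem iteratedDeriv_comp_const_mul_of_analyticAt {f : ℂ → ℂ} {c z : ℂ}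
    (hf : AnalyticAt ℂ f (c * z)) (n : ℕ) :
    iteratedDeriv n (fun w => f (c * w)) z = c ^ n * iteratedDeriv n f (c * z) := by
  induction n generalizing z with
  | zero => simp
  | succ n ih =>
    have hU : IsOpen {w : ℂ | AnalyticAt ℂ f (c * w)} :=
      (isOpen_analyticAt ℂ f).preimage (continuous_const_mul c)
    have hev : iteratedDeriv n (fun w => f (c * w)) =ᶠ[𝓝 z]
        fun w => c ^ n * iteratedDeriv n f (c * w) :=
      eventually_of_mem (hU.mem_nhds hf) fun w hw => ih hw
    have hD : DifferentiableAt ℂ (iteratedDeriv n f) (c * z) := by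
      rw [iteratedDeriv_eq_iterate]
      exact (AnalyticOnNhd.iterated_deriv (fun _ h => h) n (c * z) hf).differentiableAt
    have hderiv : HasDerivAt (fun w => iteratedDeriv n f (c * w))
        (deriv (iteratedDeriv n f) (c * z) * c) z := by
      simpa [Function.comp_def] using hD.hasDerivAt.comp z ((hasDerivAt_id z).const_mul c)
    rw [iteratedDeriv_succ, iteratedDeriv_succ, hev.deriv_eq,
      deriv_const_mul _ hderiv.differentiableAt, hderiv.deriv]
    ring

theorem coeff_Pt {f : ℂ → ℂ} (hf : AnalyticAt ℂ f 0) (x : ℂ) (k : ℕ) :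
    coeff (Pt x f) k = x ^ k * coeff f k := by
  have := iteratedDeriv_comp_const_mul_of_analyticAt (c := x) (z := 0) (by simpa using hf) k
  rw [coeff, coeff, show Pt x f = fun w => f (x * w) from rfl, this, mul_zero, mul_div_assoc]

theorem hadamard_Pt_left {f : ℂ → ℂ} (hf : AnalyticAt ℂ f 0) (h : ℂ → ℂ) (x z : ℂ) :
    hadamard (Pt x f) h z = hadamard f h (x * z) :=
  tsum_congr fun k => by rw [coeff_Pt hf]; ring

theorem hadamard_Pt_right {g : ℂ → ℂ} (hg : AnalyticAt ℂ g 0) (f : ℂ → ℂ) (x z : ℂ) :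
    hadamard f (Pt x g) z = hadamard f g (x * z) :=
  tsum_congr fun k => by rw [coeff_Pt hg]; ring

theorem hadamard_zero (f g : ℂ → ℂ) : hadamard f g 0 = f 0 * g 0 := by
  rw [hadamard, tsum_eq_single 0 fun k hk => by simp [zero_pow hk]]
  simp [coeff]

theorem coeff_sub {f g : ℂ → ℂ} (hf : AnalyticAt ℂ f 0) (hg : AnalyticAt ℂ g 0) (k : ℕ) :
    coeff (f - g) k = coeff f k - coeff g k := by
  rw [coeff, iteratedDeriv_sub hf.contDiffAt hg.contDiffAt, sub_div]
  rfl

theorem norm_coeff_le {f : ℂ → ℂ} {ρ C : ℝ} (hρ : 0 < ρ)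
    (hf : DifferentiableOn ℂ f (closedBall 0 ρ)) (hC : ∀ z ∈ sphere 0 ρ, ‖f z‖ ≤ C) (k : ℕ) :
    ‖coeff f k‖ ≤ C / ρ ^ k := by
  have hk : (0 : ℝ) < k.factorial := by positivity
  have := Complex.norm_iteratedDeriv_le_of_forall_mem_sphere_norm_le k hρ
    (hf.diffContOnCl_ball subset_rfl) hC
  rw [coeff, norm_div, Complex.norm_natCast, div_le_iff₀ hk]
  exact this.trans_eq (by ring)

theorem eventually_forall_closedBall_dist_lt {ρ δ : ℝ} (hρ : ρ < 1) (hδ : 0 < δ)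
    (F₀ : ℂ →ᵤ[S 1] ℂ) :
    ∀ᶠ F in 𝓝 F₀, ∀ z ∈ closedBall (0 : ℂ) ρ,
      dist (UniformOnFun.toFun (S 1) F₀ z) (UniformOnFun.toFun (S 1) F z) < δ :=
  UniformOnFun.gen_mem_nhds ℂ (S 1) F₀ ⟨closedBall_subset_ball hρ, isCompact_closedBall _ _⟩
    (dist_mem_uniformity hδ)

theorem continuousOn_coeff (k : ℕ) :
    ContinuousOn (fun F : ℂ →ᵤ[S 1] ℂ => coeff (UniformOnFun.toFun (S 1) F) k)
      {F | AnalyticOnNhd ℂ (UniformOnFun.toFun (S 1) F) (ball 0 1)} := by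
  intro F₀ hF₀
  rw [ContinuousWithinAt, Metric.tendsto_nhds]
  intro ε hε
  filter_upwards [mem_nhdsWithin_of_mem_nhds (eventually_forall_closedBall_dist_lt
    (by norm_num : (1 / 2 : ℝ) < 1) (by positivity : 0 < ε / 2 * (1 / 2) ^ k) F₀),
    self_mem_nhdsWithin] with F hFF₀ hF
  set f := UniformOnFun.toFun (S 1) F
  set f₀ := UniformOnFun.toFun (S 1) F₀
  have hdiff : DifferentiableOn ℂ (f - f₀) (closedBall 0 (1 / 2)) :=
    (hF.differentiableOn.sub hF₀.differentiableOn).mono (closedBall_subset_ball (by norm_num))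
  have hsmall : ∀ z ∈ sphere (0 : ℂ) (1 / 2), ‖(f - f₀) z‖ ≤ ε / 2 * (1 / 2) ^ k := fun z hz => by
    simpa [dist_eq_norm, norm_sub_rev] using (hFF₀ z (sphere_subset_closedBall hz)).le
  have hmem : (0 : ℂ) ∈ ball 0 1 := mem_ball_self one_pos
  calc dist (coeff f k) (coeff f₀ k) = ‖coeff (f - f₀) k‖ := by
        rw [coeff_sub (hF 0 hmem) (hF₀ 0 hmem), dist_eq_norm]
    _ ≤ ε / 2 * (1 / 2) ^ k / (1 / 2) ^ k := norm_coeff_le (by norm_num) hdiff hsmall k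
    _ < ε := by field_simp; linarith

theorem norm_coeff_mul_coeff_mul_pow_le {f g : ℂ → ℂ} {w : ℂ} {ρ r₁ r₀ C Cg : ℝ}
    (hρ : 0 < ρ) (hr₁ : 0 < r₁)
    (hf : DifferentiableOn ℂ f (closedBall 0 ρ)) (hC : ∀ z ∈ sphere 0 ρ, ‖f z‖ ≤ C)
    (hg : DifferentiableOn ℂ g (closedBall 0 r₁)) (hCg : ∀ z ∈ sphere 0 r₁, ‖g z‖ ≤ Cg)
    (hw : ‖w‖ ≤ r₀) (k : ℕ) :
    ‖coeff f k * coeff g k * w ^ k‖ ≤ C * Cg * (r₀ / (ρ * r₁)) ^ k := by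
  have hcf := norm_coeff_le hρ hf hC k
  have hcg := norm_coeff_le hr₁ hg hCg k
  calc ‖coeff f k * coeff g k * w ^ k‖ = ‖coeff f k‖ * ‖coeff g k‖ * ‖w‖ ^ k := by
        rw [norm_mul, norm_mul, norm_pow]
    _ ≤ C / ρ ^ k * (Cg / r₁ ^ k) * r₀ ^ k :=
        mul_le_mul (mul_le_mul hcf hcg (norm_nonneg _) ((norm_nonneg _).trans hcf))
          (pow_le_pow_left₀ (norm_nonneg w) hw k) (by positivity)
          (mul_nonneg ((norm_nonneg _).trans hcf) ((norm_nonneg _).trans hcg))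
    _ = C * Cg * (r₀ / (ρ * r₁)) ^ k := by
        rw [div_pow, mul_pow]
        field_simp

theorem continuousOn_hadamard {g : ℂ → ℂ} {R : ℝ} (hg : AnalyticOnNhd ℂ g (ball 0 R)) :
    ContinuousOn (fun p : (ℂ →ᵤ[S 1] ℂ) × ℂ => hadamard (UniformOnFun.toFun (S 1) p.1) g p.2)
      ({F | AnalyticOnNhd ℂ (UniformOnFun.toFun (S 1) F) (ball 0 1)} ×ˢ ball 0 R) := by
  rintro ⟨F₀, w₀⟩ ⟨hF₀, hw₀⟩
  rw [mem_ball_zero_iff] at hw₀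
  -- radii with `‖w₀‖ < r₀ < ρ * r₁`, `ρ < 1`, `r₁ < R`, so that the series has a geometric majorant
  obtain ⟨r₁, hw₀r₁, hr₁R⟩ := exists_between hw₀
  have hr₁ : 0 < r₁ := (norm_nonneg w₀).trans_lt hw₀r₁
  obtain ⟨ρ, hρw₀, hρ1⟩ := exists_between ((div_lt_one hr₁).mpr hw₀r₁)
  have hρ : 0 < ρ := (div_nonneg (norm_nonneg w₀) hr₁.le).trans_lt hρw₀
  obtain ⟨r₀, hw₀r₀, hr₀⟩ := exists_between ((div_lt_iff₀ hr₁).mp hρw₀)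
  have hq : 0 ≤ r₀ / (ρ * r₁) := div_nonneg ((norm_nonneg w₀).trans hw₀r₀.le) (by positivity)
  have hq1 : r₀ / (ρ * r₁) < 1 := (div_lt_one (by positivity)).mpr hr₀
  obtain ⟨C, hC⟩ := (isCompact_sphere (0 : ℂ) ρ).exists_bound_of_continuousOn
    (hF₀.continuousOn.mono (sphere_subset_ball hρ1))
  obtain ⟨Cg, hCg⟩ := (isCompact_sphere (0 : ℂ) r₁).exists_bound_of_continuousOn
    (hg.continuousOn.mono (sphere_subset_ball hr₁R))
  have hnhds : {F | ∀ z ∈ closedBall (0 : ℂ) ρ, dist (UniformOnFun.toFun (S 1) F₀ z)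
      (UniformOnFun.toFun (S 1) F z) < 1} ×ˢ ball 0 r₀ ∈ 𝓝 (F₀, w₀) :=
    prod_mem_nhds (eventually_forall_closedBall_dist_lt hρ1 one_pos F₀)
      (isOpen_ball.mem_nhds (mem_ball_zero_iff.mpr hw₀r₀))
  rw [← continuousWithinAt_inter hnhds]
  refine ContinuousOn.continuousWithinAt ?_ ⟨⟨hF₀, mem_ball_zero_iff.mpr hw₀⟩,
    mem_of_mem_nhds hnhds⟩
  refine continuousOn_tsum (u := fun k => (C + 1) * Cg * (r₀ / (ρ * r₁)) ^ k)
    (fun k => ?_) ((summable_geometric_of_lt_one hq hq1).mul_left _) ?_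
  · exact ((((continuousOn_coeff k).comp continuousOn_fst fun p hp => hp.1.1).mul
      continuousOn_const).mul (continuous_snd.pow k).continuousOn)
  · rintro k ⟨F, w⟩ ⟨⟨hF, -⟩, hFF₀, hw⟩
    refine norm_coeff_mul_coeff_mul_pow_le hρ hr₁
      (hF.differentiableOn.mono (closedBall_subset_ball hρ1)) (fun z hz => ?_)
      (hg.differentiableOn.mono (closedBall_subset_ball hr₁R)) hCg (mem_ball_zero_iff.mp hw).le k
    have := hFF₀ z (sphere_subset_closedBall hz)
    rw [dist_comm, dist_eq_norm] at this
    linarith [norm_le_norm_add_norm_sub' (UniformOnFun.toFun (S 1) F z)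
      (UniformOnFun.toFun (S 1) F₀ z), hC z hz]

theorem IsCompact.exists_lt_forall_prod_ball_ne_zero {X : Type*} [TopologicalSpace X]
    {K : Set X} (hK : IsCompact K) {G : X × ℂ → ℂ} {r r₀ : ℝ} (hr : r < r₀)
    (hG : ContinuousOn G (K ×ˢ closedBall 0 r₀)) (hne : ∀ p ∈ K ×ˢ closedBall 0 r, G p ≠ 0) :
    ∃ x, r < x ∧ x ≤ r₀ ∧ ∀ p ∈ K ×ˢ ball 0 x, G p ≠ 0 := by
  set Z := K ×ˢ closedBall 0 r₀ ∩ (fun p => ‖G p‖) ⁻¹' Iic 0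
  have hZ : IsCompact Z :=
    hG.norm.lowerSemicontinuousOn.isCompact_inter_preimage_Iic (hK.prod (isCompact_closedBall _ _)) 0
  have hZr : ∀ p ∈ Z, r < ‖p.2‖ := fun p ⟨⟨hpK, _⟩, hp0⟩ => by
    by_contra! hp
    exact hne p ⟨hpK, mem_closedBall_zero_iff.mpr hp⟩ (norm_le_zero_iff.mp hp0)
  obtain ⟨a, hra, ha⟩ := hZ.exists_forall_le' continuous_snd.norm.continuousOn hZr
  refine ⟨min a r₀, lt_min hra hr, min_le_right _ _, fun p ⟨hpK, hp⟩ hp0 => ?_⟩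
  rw [mem_ball_zero_iff, lt_min_iff] at hp
  have hpZ : p ∈ Z := ⟨⟨hpK, mem_closedBall_zero_iff.mpr hp.2.le⟩, by simp [hp0]⟩
  exact (ha p hpZ).not_gt hp.1

theorem exists_one_lt_forall_hadamard_ne_zero {V : Set (ℂ → ℂ)}
    (hV : ∀ f ∈ V, AnalyticOnNhd ℂ f (ball 0 1)) (hc : IsCompact (UniformOnFun.ofFun (S 1) '' V))
    {g : ℂ → ℂ} {R : ℝ} (hg : AnalyticOnNhd ℂ g (ball 0 R)) (hR : 1 < R)
    (hne : ∀ f ∈ V, ∀ w : ℂ, ‖w‖ ≤ 1 → hadamard f g w ≠ 0) :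
    ∃ x : ℝ, 1 < x ∧ x < R ∧ ∀ f ∈ V, ∀ w : ℂ, ‖w‖ < x → hadamard f g w ≠ 0 := by
  obtain ⟨r₀, h1r₀, hr₀R⟩ := exists_between hR
  have hK : UniformOnFun.ofFun (S 1) '' V ⊆
      {F | AnalyticOnNhd ℂ (UniformOnFun.toFun (S 1) F) (ball 0 1)} := by
    rintro _ ⟨f, hf, rfl⟩
    exact hV f hf
  have hG := (continuousOn_hadamard hg).mono (prod_mono hK (closedBall_subset_ball hr₀R))
  obtain ⟨x, h1x, hxr₀, hx⟩ := hc.exists_lt_forall_prod_ball_ne_zero h1r₀ hG <| by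
    rintro ⟨_, w⟩ ⟨⟨f, hf, rfl⟩, hw⟩
    exact hne f hf w (mem_closedBall_zero_iff.mp hw)
  exact ⟨x, h1x, hxr₀.trans_lt hr₀R, fun f hf w hw =>
    hx (UniformOnFun.ofFun (S 1) f, w) ⟨⟨f, hf, rfl⟩, mem_ball_zero_iff.mpr hw⟩⟩

theorem AnalyticOnNhd.Pt {f : ℂ → ℂ} {U : Set ℂ} (hf : AnalyticOnNhd ℂ f U) (x : ℂ) :
    AnalyticOnNhd ℂ (Pt x f) ((x * ·) ⁻¹' U) :=
  fun _ hz => (hf _ hz).comp (analyticAt_const.mul analyticAt_id)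

theorem mul_mem_ball_norm {x z : ℂ} (hx : x ≠ 0) (hz : z ∈ ball (0 : ℂ) 1) :
    x * z ∈ ball (0 : ℂ) ‖x‖ := by
  rw [mem_ball_zero_iff, norm_mul]
  exact mul_lt_of_lt_one_right (norm_pos_iff.mpr hx) (mem_ball_zero_iff.mp hz)

theorem Pt_mem_dual {V : Set (ℂ → ℂ)} {g : ℂ → ℂ} {x : ℂ} (hx : x ≠ 0)
    (hg : AnalyticOnNhd ℂ g (ball 0 ‖x‖)) (hg0 : g 0 = 1)
    (hne : ∀ f ∈ V, ∀ w ∈ ball (0 : ℂ) ‖x‖, hadamard f g w ≠ 0) : Pt x g ∈ dual V := by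
  refine ⟨⟨fun z hz => hg.Pt x z (mul_mem_ball_norm hx hz), by simp [Pt, hg0]⟩,
    fun f hf z hz => ?_⟩
  rw [hadamard_Pt_right (hg 0 (mem_ball_self (norm_pos_iff.mpr hx)))]
  exact hne f hf _ (mul_mem_ball_norm hx hz)

theorem Pt_mem_VT {V : Set (ℂ → ℂ)} {f : ℂ → ℂ} {z : ℂ} (hf : f ∈ dual V)
    (hz : z ∈ ball (0 : ℂ) 1) (hz0 : z ≠ 0) : Pt z f ∈ VT V := by
  obtain ⟨⟨hfan, hf0⟩, hne⟩ := hf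
  have hzpos : 0 < ‖z‖ := norm_pos_iff.mpr hz0
  refine ⟨⟨‖z‖⁻¹, (one_lt_inv₀ hzpos).mpr (mem_ball_zero_iff.mp hz), ?_⟩, by simp [Pt, hf0],
    fun v hv => ?_⟩
  · refine hfan.Pt z |>.mono fun w hw => ?_
    have := mul_lt_mul_of_pos_left (mem_ball_zero_iff.mp hw) hzpos
    rwa [mul_inv_cancel₀ hzpos.ne', ← norm_mul, ← mem_ball_zero_iff] at this
  · rw [hadamard_Pt_right (hfan 0 (mem_ball_self one_pos)), mul_one]
    exact hne v hv z hz

theorem stmt15 (V : Set (ℂ → ℂ)) (hV : V ⊆ A0)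
    (hc : IsCompact ((UniformOnFun.ofFun (S 1)) '' V))
    (hcomplete : ∀ g ∈ VT V, ∀ x : ℂ, ‖x‖ ≤ 1 → Pt x g ∈ VT V) :
    dual (dual V) = perp (VT V) := by
  ext h
  refine ⟨fun ⟨hA0, hh⟩ => ⟨hA0, fun g hg => ?_⟩, fun ⟨hA0, hh⟩ => ⟨hA0, fun f hf z hz => ?_⟩⟩
  · obtain ⟨⟨R, hR, hgR⟩, hg0, -⟩ := id hg
    have hg0' : AnalyticAt ℂ g 0 := hgR 0 (mem_ball_self (by linarith))
    have hclosed : ∀ f ∈ V, ∀ w : ℂ, ‖w‖ ≤ 1 → hadamard f g w ≠ 0 := fun f hf w hw => by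
      simpa [hadamard_Pt_right hg0'] using (hcomplete g hg w hw).2.2 f hf
    obtain ⟨x, hx1, hxR, hx⟩ :=
      exists_one_lt_forall_hadamard_ne_zero (fun f hf => (hV hf).1) hc hgR hR hclosed
    have hxn : ‖(x : ℂ)‖ = x := Complex.norm_of_nonneg (by linarith)
    have hx0 : (x : ℂ) ≠ 0 := by exact_mod_cast (by linarith : x ≠ 0)
    have hdual : Pt x g ∈ dual V := Pt_mem_dual hx0 (hgR.mono (ball_subset_ball (by linarith)))
      hg0 fun f hf w hw => hx f hf w (by rwa [mem_ball_zero_iff, hxn] at hw)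
    have hxinv : (x : ℂ)⁻¹ ∈ ball (0 : ℂ) 1 := by
      rw [mem_ball_zero_iff, norm_inv, hxn]
      exact inv_lt_one_of_one_lt₀ hx1
    simpa [hadamard_Pt_left hg0', hx0] using hh _ hdual _ hxinv
  · rcases eq_or_ne z 0 with rfl | hz0
    · simp [hadamard_zero, hf.1.2, hA0.2]
    · simpa [hadamard_Pt_left (hf.1.1 0 (mem_ball_self one_pos))] using
        hh _ (Pt_mem_VT hf hz hz0)
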